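/- arXiv:1304.3836 — 2 statements merged into one kernel-verified Lean document; each statement's English description precedes it below -/
import Mathlib

section
/- The Lie algebra D_n = Der_K(P_n) of derivations of the polynomial algebra P_n over a field K of characteristic zero is a simple Lie algebra. -/
/-!
A nonzero ideal `I` contains a nonzero derivation `x`. Bracketing with `∂ᵢ` differentiates every
coefficient `x (Xⱼ)`, so repeated brackets lower total degrees until `I` contains a nonzero
derivation `D` with constant coefficients `cⱼ`. Then `⁅D, Xᵢ • ∂ₖ⁆ = cᵢ • ∂ₖ` puts every `∂ₖ` in `I`;
as `∂ₖ` is surjective in characteristic zero, `⁅∂ₖ, g • ∂ₖ⁆ = ∂ₖ g • ∂ₖ` puts every `f • ∂ₖ` in `I`,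
and these span all derivations. Finally `⁅∂ᵢ, Xᵢ • ∂ᵢ⁆ = ∂ᵢ`, so the algebra is not abelian.
-/

namespace MvPolynomial

variable {σ R K : Type*}

section CommSemiring

variable [CommSemiring R]

theorem totalDegree_pderiv_le (i : σ) (f : MvPolynomial σ R) :
    (pderiv i f).totalDegree ≤ f.totalDegree - 1 := by
  refine Finset.sup_le fun m hm => ?_
  have hcoeff : coeff (m + Finsupp.single i 1) f ≠ 0 := by
    intro h
    rw [mem_support_iff, coeff_pderiv, h, zero_mul] at hm
    exact hm rfl
  have hle := le_totalDegree (mem_support_iff.mpr hcoeff)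
  rw [Finsupp.sum_add_index' (fun _ => rfl) (fun _ _ _ => rfl),
    Finsupp.sum_single_index rfl] at hle
  omega

theorem eq_C_of_forall_pderiv_eq_zero [IsAddTorsionFree R] {f : MvPolynomial σ R}
    (h : ∀ i, pderiv i f = 0) : f = C (coeff 0 f) := by
  classical
  ext m
  rw [coeff_C]
  split_ifs with hm
  · rw [hm]
  obtain ⟨i, hi⟩ : ∃ i, m i ≠ 0 := by
    by_contra! h0
    exact hm (Finsupp.ext h0).symm
  have hcoeff := coeff_pderiv (i := i) f (m - Finsupp.single i 1)
  rw [h i, coeff_zero, tsub_add_cancel_of_le (Finsupp.single_le_iff.mpr (by omega)), mul_comm,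
    ← Nat.cast_succ, ← nsmul_eq_mul] at hcoeff
  exact (nsmul_eq_zero_iff_right (Nat.succ_ne_zero _)).mp hcoeff.symm

end CommSemiring

section Field

variable [Field K] [CharZero K]

theorem pderiv_surjective (i : σ) :
    Function.Surjective (pderiv i : MvPolynomial σ K → MvPolynomial σ K) := by
  intro f
  induction f using MvPolynomial.induction_on' with
  | monomial s a =>
    refine ⟨monomial (s + Finsupp.single i 1) (a / (s i + 1)), ?_⟩
    rw [pderiv_monomial, add_tsub_cancel_right]
    congr 1
    simp only [Finsupp.add_apply, Finsupp.single_eq_same, Nat.cast_add, Nat.cast_one]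
    field_simp
  | add p q hp hq =>
    obtain ⟨g, rfl⟩ := hp
    obtain ⟨h, rfl⟩ := hq
    exact ⟨g + h, map_add _ g h⟩

end Field

section Derivations

variable [CommRing R]

local notation "𝔇" => Derivation R (MvPolynomial σ R) (MvPolynomial σ R)

theorem lie_pderiv_apply_X (i : σ) (D : 𝔇) (k : σ) :
    ⁅(pderiv i : 𝔇), D⁆ (X k) = pderiv i (D (X k)) := by
  classical
  rw [Derivation.commutator_apply, pderiv_X, Pi.single_apply]
  split_ifs <;> simp

theorem lie_pderiv_smul_pderiv (i j : σ) (g : MvPolynomial σ R) :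
    ⁅(pderiv i : 𝔇), g • (pderiv j : 𝔇)⁆ = pderiv i g • pderiv j := by
  classical
  refine derivation_ext fun k => ?_
  simp only [Derivation.commutator_apply, Derivation.smul_apply, smul_eq_mul, pderiv_X,
    Pi.single_apply]
  split_ifs <;> simp

theorem lie_X_smul_pderiv {D : 𝔇} {c : σ → R} (hD : ∀ j, D (X j) = C (c j)) (i k : σ) :
    ⁅D, (X i : MvPolynomial σ R) • (pderiv k : 𝔇)⁆ = c i • pderiv k := by
  classical
  refine derivation_ext fun l => ?_
  simp only [Derivation.commutator_apply, Derivation.smul_apply, smul_eq_mul, pderiv_X,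
    Pi.single_apply, hD, pderiv_C, mul_zero, sub_zero]
  split_ifs <;> simp [hD, smul_eq_C_mul]

theorem eq_sum_smul_pderiv [Fintype σ] (D : 𝔇) : D = ∑ i, D (X i) • (pderiv i : 𝔇) := by
  classical
  refine derivation_ext fun k => ?_
  rw [← Derivation.coeFnAddMonoidHom_apply (∑ i, _), map_sum, Finset.sum_apply]
  simp [Derivation.coeFnAddMonoidHom_apply, pderiv_X, Pi.single_apply]

theorem not_isLieAbelian_derivation [Nontrivial R] [Nonempty σ] : ¬IsLieAbelian 𝔇 := by
  intro h
  obtain ⟨i⟩ := ‹Nonempty σ›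
  have hlie : ⁅(pderiv i : 𝔇), (X i : MvPolynomial σ R) • (pderiv i : 𝔇)⁆ = pderiv i := by
    rw [lie_pderiv_smul_pderiv, pderiv_X_self, one_smul]
  have := congrArg (· (X i)) (hlie.symm.trans (h.trivial _ _))
  simp at this

end Derivations

section Ideals

variable [Field K]

local notation "𝔇" => Derivation K (MvPolynomial σ K) (MvPolynomial σ K)

variable (I : LieIdeal K (Derivation K (MvPolynomial σ K) (MvPolynomial σ K)))

theorem pderiv_mem_of_apply_X_eq_C {D : 𝔇} (hDI : D ∈ I) {c : σ → K} (hc : c ≠ 0)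
    (hD : ∀ j, D (X j) = C (c j)) (k : σ) : (pderiv k : 𝔇) ∈ I := by
  obtain ⟨i, hi⟩ := Function.ne_iff.mp hc
  have hmem : c i • (pderiv k : 𝔇) ∈ I := lie_X_smul_pderiv hD i k ▸ lie_mem_left K _ I _ _ hDI
  simpa [smul_smul, inv_mul_cancel₀ hi] using I.smul_mem (c i)⁻¹ hmem

variable [CharZero K]

theorem exists_mem_apply_X_eq_C [Finite σ] {x : 𝔇} (hxI : x ∈ I) (hx : x ≠ 0) :
    ∃ D ∈ I, ∃ c : σ → K, c ≠ 0 ∧ ∀ j, D (X j) = C (c j) := by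
  have : Fintype σ := Fintype.ofFinite σ
  suffices key : ∀ M, ∀ x ∈ I, x ≠ 0 → (∀ j, (x (X j)).totalDegree ≤ M) →
      ∃ D ∈ I, ∃ c : σ → K, c ≠ 0 ∧ ∀ j, D (X j) = C (c j) from
    key _ x hxI hx fun j => Finset.le_sup (f := fun j => (x (X j)).totalDegree) (Finset.mem_univ j)
  intro M
  induction M with
  | zero =>
    intro x hxI hx hdeg
    have hconst j : x (X j) = C (coeff 0 (x (X j))) :=
      totalDegree_eq_zero_iff_eq_C.mp (Nat.le_zero.mp (hdeg j))
    refine ⟨x, hxI, fun j => coeff 0 (x (X j)), fun hc => hx (derivation_ext fun j => ?_), hconst⟩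
    rw [hconst j, congrFun hc j, Pi.zero_apply, map_zero, Derivation.zero_apply]
  | succ M ih =>
    intro x hxI hx hdeg
    by_cases hM : ∀ j, (x (X j)).totalDegree ≤ M
    · exact ih x hxI hx hM
    obtain ⟨j, hj⟩ := not_forall.mp hM
    obtain ⟨i, hi⟩ : ∃ i, pderiv i (x (X j)) ≠ 0 := by
      by_contra! h
      have := totalDegree_eq_zero_iff_eq_C.mpr (eq_C_of_forall_pderiv_eq_zero h)
      omega
    refine ih ⁅pderiv i, x⁆ (I.lie_mem hxI) (fun h => hi ?_) fun k => ?_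
    · rw [← lie_pderiv_apply_X, h, Derivation.zero_apply]
    · rw [lie_pderiv_apply_X]
      exact (totalDegree_pderiv_le i _).trans (by have := hdeg k; omega)

theorem eq_top_of_forall_pderiv_mem [Finite σ] (h : ∀ k, (pderiv k : 𝔇) ∈ I) : I = ⊤ := by
  have : Fintype σ := Fintype.ofFinite σ
  have hsmul (f : MvPolynomial σ K) (k : σ) : f • (pderiv k : 𝔇) ∈ I := by
    obtain ⟨g, rfl⟩ := pderiv_surjective k f
    exact lie_pderiv_smul_pderiv k k g ▸ lie_mem_left K 𝔇 I _ _ (h k)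
  refine eq_top_iff.mpr fun D _ => ?_
  rw [eq_sum_smul_pderiv D]
  exact sum_mem fun k _ => hsmul _ k

end Ideals

end MvPolynomial

open MvPolynomial

/-- The Lie algebra D_n = Der_K(P_n) of derivations of the polynomial algebra P_n
(n ≥ 1) over a field of characteristic zero is simple. -/
theorem derivation_lie_isSimple (n : ℕ) (hn : 0 < n) (K : Type*) [Field K] [CharZero K] :
    LieAlgebra.IsSimple K (Derivation K (MvPolynomial (Fin n) K) (MvPolynomial (Fin n) K)) := by
  have : Nonempty (Fin n) := ⟨⟨0, hn⟩⟩
  refine ⟨fun I => or_iff_not_imp_left.mpr fun hI => ?_, not_isLieAbelian_derivation⟩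
  obtain ⟨x, hxI, hx⟩ : ∃ x ∈ I, x ≠ 0 := by simpa [LieSubmodule.eq_bot_iff] using hI
  obtain ⟨D, hDI, c, hc, hD⟩ := exists_mem_apply_X_eq_C I hxI hx
  exact eq_top_of_forall_pderiv_mem I (pderiv_mem_of_apply_X_eq_C I hDI hc hD)
end

section
/- Two Lie algebra automorphisms σ, τ of D_n = Der_K(P_n) are equal if and only if σ(∂_i) = τ(∂_i) and σ(x_i∂_i) = τ(x_i∂_i) for all i = 1, ..., n. -/
/-!
Replacing the pair by `ρ = τ⁻¹ ∘ σ`, it suffices to show that a Lie automorphism `ρ` fixing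
every `∂ᵢ` and every `Hᵢ = xᵢ∂ᵢ` is the identity. The derivation `x^m ∂ⱼ` is an eigenvector of
every `ad Hᵢ`, of weight `m - eⱼ`, and `ad ∂ᵢ` maps it to a multiple of `x^(m - eᵢ) ∂ⱼ`. By
well-founded induction on `m`, the difference `δ = ρ(x^m ∂ⱼ) - x^m ∂ⱼ` commutes with every `∂ᵢ`
and has weight `m - eⱼ`. Commuting with every `∂ᵢ` makes each `δ(xₖ)` constant, and then
`[Hᵢ, δ](xₖ) = -δᵢₖ δ(xₖ)`; so if `δ(xₖ) ≠ 0` the weight is `-eₖ`, which forces `m = 0`, the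
case covered by `ρ(∂ⱼ) = ∂ⱼ`. Hence `ρ` fixes every `P_n ∂ⱼ`, and these span `D_n`.
-/

open MvPolynomial

theorem Derivation.lie_smul_smul {R A : Type*} [CommRing R] [CommRing A] [Algebra R A]
    (f g : A) (D E : Derivation R A A) :
    ⁅f • D, g • E⁆ = (f * D g) • E - (g * E f) • D + (f * g) • ⁅D, E⁆ := by
  ext a
  simp only [Derivation.commutator_apply, Derivation.add_apply, Derivation.sub_apply,
    Derivation.smul_apply, smul_eq_mul, Derivation.leibniz]
  ring

namespace MvPolynomial

section CommRing

variable {σ R : Type*} [CommRing R]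

local notation "𝔇" => Derivation R (MvPolynomial σ R) (MvPolynomial σ R)

theorem lie_pderiv_pderiv (i j : σ) : ⁅(pderiv i : 𝔇), (pderiv j : 𝔇)⁆ = 0 := by
  classical
  refine derivation_ext fun k => ?_
  simp only [Derivation.commutator_apply, pderiv_X, Derivation.zero_apply]
  by_cases hik : i = k <;> by_cases hjk : j = k <;> simp [hik, hjk]

theorem lie_smul_pderiv_smul_pderiv (f g : MvPolynomial σ R) (i j : σ) :
    ⁅(f • pderiv i : 𝔇), (g • pderiv j : 𝔇)⁆ =
      (f * pderiv i g) • pderiv j - (g * pderiv j f) • pderiv i := by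
  rw [Derivation.lie_smul_smul, lie_pderiv_pderiv, smul_zero, add_zero]

theorem lie_pderiv_monomial_smul_pderiv (m : σ →₀ ℕ) (c : R) (i j : σ) :
    ⁅(pderiv i : 𝔇), (monomial m c • pderiv j : 𝔇)⁆ =
      monomial (m - Finsupp.single i 1) (c * m i) • pderiv j := by
  simpa using lie_smul_pderiv_smul_pderiv 1 (monomial m c) i j

theorem lie_X_smul_pderiv_monomial_smul_pderiv (m : σ →₀ ℕ) (c : R) (i j : σ) :
    ⁅((X i : MvPolynomial σ R) • pderiv i : 𝔇), (monomial m c • pderiv j : 𝔇)⁆ =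
      ((m i : R) - Finsupp.single j 1 i) • (monomial m c • pderiv j : 𝔇) := by
  rw [lie_smul_pderiv_smul_pderiv, X_mul_pderiv_monomial, smul_assoc, ← Nat.cast_smul_eq_nsmul R]
  by_cases hij : i = j
  · subst hij
    rw [pderiv_X_self, mul_one, Finsupp.single_eq_same]
    module
  · rw [pderiv_X_of_ne hij, mul_zero, zero_smul, sub_zero, Finsupp.single_eq_of_ne hij]
    module

theorem derivation_eq_sum_smul_pderiv [Fintype σ] (D : 𝔇) :
    D = ∑ j, D (X j) • pderiv j := by
  classical
  refine derivation_ext fun k => ?_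
  have (a : MvPolynomial σ R) :
      (∑ j, D (X j) • pderiv j : 𝔇) a = ∑ j, D (X j) * pderiv j a := by
    rw [← Derivation.coeFnAddMonoidHom_apply, map_sum, Finset.sum_apply]
    rfl
  simp [this, Pi.single_apply]

end CommRing

section Field

variable {σ K : Type*} [Field K]

local notation "𝔇" => Derivation K (MvPolynomial σ K) (MvPolynomial σ K)

theorem weight_eq_neg_single_of_lie_pderiv_eq_zero {D : 𝔇} {a : σ → K}
    (hpderiv : ∀ i, ⁅(pderiv i : 𝔇), D⁆ = 0)
    (hweight : ∀ i, ⁅((X i : MvPolynomial σ K) • pderiv i : 𝔇), D⁆ = a i • D)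
    {k : σ} (hk : D (X k) ≠ 0) (i : σ) : a i = -Finsupp.single k 1 i := by
  classical
  have hconst : pderiv i (D (X k)) = 0 := by
    have h := congr($(hpderiv i) (X k))
    by_cases hik : i = k <;> simpa [Derivation.commutator_apply, hik] using h
  have h := congr($(hweight i) (X k))
  have hsmul : (a i + Finsupp.single k 1 i) • D (X k) = 0 := by
    by_cases hik : i = k
    · subst hik
      simp only [Derivation.commutator_apply, Derivation.smul_apply, smul_eq_mul, hconst,
        pderiv_X_self, mul_zero, mul_one, zero_sub] at h
      simp [add_smul, ← h]
    · simp [Derivation.commutator_apply, hconst, pderiv_X_of_ne (Ne.symm hik)] at h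
      rw [Finsupp.single_eq_of_ne hik, add_zero, ← h]
  linear_combination (smul_eq_zero.mp hsmul).resolve_right hk

theorem eq_zero_of_cast_sub_single_eq_neg_single [CharZero K] {m : σ →₀ ℕ} {j k : σ}
    (h : ∀ i, (m i : K) - Finsupp.single j 1 i = -Finsupp.single k 1 i) : m = 0 := by
  have hadd : m + Finsupp.single k 1 = Finsupp.single j 1 := by
    ext i
    have hi := h i
    apply Nat.cast_injective (R := K)
    simp only [Finsupp.add_apply, Nat.cast_add, Finsupp.apply_single' _ Nat.cast_zero,
      Nat.cast_one]
    linear_combination hi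
  have := congr(Finsupp.degree $hadd)
  simpa [Finsupp.degree_eq_zero_iff] using this

theorem lieEquiv_apply_monomial_smul_pderiv [CharZero K] (ρ : 𝔇 ≃ₗ⁅K⁆ 𝔇)
    (hpderiv : ∀ i, ρ (pderiv i) = pderiv i)
    (hX : ∀ i, ρ ((X i : MvPolynomial σ K) • pderiv i) =
      (X i : MvPolynomial σ K) • pderiv i)
    (m : σ →₀ ℕ) (c : K) (j : σ) :
    ρ (monomial m c • pderiv j) = monomial m c • pderiv j := by
  induction m using WellFoundedLT.induction generalizing c with
  | _ m ih =>
  by_cases hm : m = 0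
  · subst hm
    rw [← C_apply, ← algebraMap_eq, algebraMap_smul, map_smul, hpderiv]
  set M : 𝔇 := monomial m c • pderiv j
  have hlie_pderiv (i : σ) : ⁅(pderiv i : 𝔇), ρ M - M⁆ = 0 := by
    have hcomm : ⁅(pderiv i : 𝔇), ρ M⁆ = ρ ⁅(pderiv i : 𝔇), M⁆ := by
      rw [ρ.map_lie, hpderiv]
    refine (lie_sub (pderiv i : 𝔇) (ρ M) M).trans ?_
    rw [hcomm, sub_eq_zero, lie_pderiv_monomial_smul_pderiv]
    by_cases hmi : m i = 0
    · simp [hmi]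
    · refine ih _ (lt_of_le_of_ne tsub_le_self fun h => hmi ?_) _
      have := congr($h i)
      rw [Finsupp.tsub_apply, Finsupp.single_eq_same] at this
      omega
  have hlie_X (i : σ) : ⁅((X i : MvPolynomial σ K) • pderiv i : 𝔇), ρ M - M⁆ =
      ((m i : K) - Finsupp.single j 1 i) • (ρ M - M) := by
    have hcomm : ⁅((X i : MvPolynomial σ K) • pderiv i : 𝔇), ρ M⁆ =
        ρ ⁅((X i : MvPolynomial σ K) • pderiv i : 𝔇), M⁆ := by rw [ρ.map_lie, hX]
    refine (lie_sub ((X i : MvPolynomial σ K) • pderiv i : 𝔇) (ρ M) M).trans ?_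
    rw [hcomm, lie_X_smul_pderiv_monomial_smul_pderiv, map_smul, smul_sub]
  refine sub_eq_zero.mp (derivation_ext fun k => ?_)
  by_contra hk
  exact hm (eq_zero_of_cast_sub_single_eq_neg_single
    (weight_eq_neg_single_of_lie_pderiv_eq_zero hlie_pderiv hlie_X hk))

theorem lieEquiv_eq_refl_of_apply_pderiv_of_apply_X_smul_pderiv [Fintype σ] [CharZero K]
    (ρ : 𝔇 ≃ₗ⁅K⁆ 𝔇) (hpderiv : ∀ i, ρ (pderiv i) = pderiv i)
    (hX : ∀ i, ρ ((X i : MvPolynomial σ K) • pderiv i) =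
      (X i : MvPolynomial σ K) • pderiv i) :
    ρ = LieEquiv.refl := by
  have hsmul (f : MvPolynomial σ K) (j : σ) : ρ (f • pderiv j) = f • pderiv j := by
    induction f using MvPolynomial.induction_on' with
    | monomial m c => exact lieEquiv_apply_monomial_smul_pderiv ρ hpderiv hX m c j
    | add p q hp hq => rw [add_smul, map_add, hp, hq]
  ext D : 1
  rw [LieEquiv.refl_apply, derivation_eq_sum_smul_pderiv D, map_sum]
  exact Finset.sum_congr rfl fun j _ => hsmul _ j

end Field

end MvPolynomial

/-- Two Lie algebra automorphisms of D_n = Der_K(P_n) are equal iff they agree on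
∂_1,...,∂_n and on H_1 = x_1∂_1,...,H_n = x_n∂_n. -/
theorem lie_automorphisms_eq_iff (n : ℕ) (K : Type*) [Field K] [CharZero K]
    (σ τ : Derivation K (MvPolynomial (Fin n) K) (MvPolynomial (Fin n) K) ≃ₗ⁅K⁆
           Derivation K (MvPolynomial (Fin n) K) (MvPolynomial (Fin n) K)) :
    σ = τ ↔ (∀ i : Fin n, σ (pderiv i) = τ (pderiv i)) ∧
      (∀ i : Fin n, σ ((X i : MvPolynomial (Fin n) K) • pderiv i) =
        τ ((X i : MvPolynomial (Fin n) K) • pderiv i)) := by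
  refine ⟨by rintro rfl; exact ⟨fun _ => rfl, fun _ => rfl⟩, fun ⟨hpderiv, hX⟩ => ?_⟩
  have hρ := lieEquiv_eq_refl_of_apply_pderiv_of_apply_X_smul_pderiv (σ.trans τ.symm)
    (fun i => by rw [LieEquiv.trans_apply, hpderiv, τ.symm_apply_apply])
    (fun i => by rw [LieEquiv.trans_apply, hX, τ.symm_apply_apply])
  ext D : 1
  exact τ.symm_apply_eq.mp congr($hρ D)
end
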